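/- arXiv:1611.02460 — 3 statements merged into one kernel-verified Lean document; each statement's English description precedes it below -/
import Mathlib

section
/- Let (X_t)_{t≥0} be a nonnegative real-valued stochastic process adapted to a filtration (F_t) with X_0 deterministic, satisfying E[X_t | F_{t-1}] ≤ β·X_{t-1} for all t ≥ 1, where 0 < β < 1. For g ∈ (0, X_0), let τ(g) := min{t ≥ 0 : X_t ≤ g}. Then E[τ(g)] ≤ 2·⌈log_β(g/(2X_0))⌉. -/
/-!
By Markov's inequality and `E[X_t] ≤ β^t x0`, `P(τ > t) ≤ P(X_t > g) ≤ min(1, β^t x0 / g)`.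
With `N = ⌈log_β (g / (2 x0))⌉` we have `β^N x0 / g ≤ 1/2`, so on the `j`-th block of `N`
consecutive times this tail probability is at most `2^{-j}`. Summing the tail probabilities
block by block gives `E[τ] ≤ N (1 + 1/2 + 1/4 + ⋯) = 2N`.
-/

open MeasureTheory ENNReal

theorem ENNReal.tsum_pow_div (r : ℝ≥0∞) {N : ℕ} (hN : N ≠ 0) :
    ∑' t : ℕ, r ^ (t / N) = N * (1 - r)⁻¹ := by
  have : NeZero N := ⟨hN⟩
  change ∑' t, (fun p : ℕ × Fin N => r ^ p.1) (Nat.divModEquiv N t) = _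
  rw [(Nat.divModEquiv N).tsum_eq (fun p : ℕ × Fin N => r ^ p.1), ENNReal.tsum_prod']
  simp [ENNReal.tsum_mul_left, ENNReal.tsum_geometric]

theorem iInf_natCast_le_tsum_ite (p : ℕ → Prop) [DecidablePred p] :
    ⨅ (t : ℕ) (_ : p t), (t : ℝ≥0∞) ≤ ∑' t, if p t then 0 else 1 := by
  by_cases h : ∃ t, p t
  · calc ⨅ (t : ℕ) (_ : p t), (t : ℝ≥0∞) ≤ Nat.find h := biInf_le _ (Nat.find_spec h)
      _ = ∑ t ∈ Finset.range (Nat.find h), if p t then 0 else 1 := by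
          rw [Finset.sum_congr rfl fun t ht => if_neg (Nat.find_min h (Finset.mem_range.1 ht))]
          simp
      _ ≤ _ := ENNReal.sum_le_tsum _
  · push Not at h
    simp [h]

theorem lintegral_iInf_notMem_le_tsum_measure {Ω : Type*} [MeasurableSpace Ω] {μ : Measure Ω}
    {s : ℕ → Set Ω} (hs : ∀ t, NullMeasurableSet (s t) μ) :
    ∫⁻ ω, ⨅ (t : ℕ) (_ : ω ∉ s t), (t : ℝ≥0∞) ∂μ ≤ ∑' t, μ (s t) := by
  classical
  calc ∫⁻ ω, ⨅ (t : ℕ) (_ : ω ∉ s t), (t : ℝ≥0∞) ∂μ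
      ≤ ∫⁻ ω, ∑' t, (s t).indicator 1 ω ∂μ := by
        refine lintegral_mono fun ω => (iInf_natCast_le_tsum_ite _).trans_eq ?_
        congr with t
        by_cases h : ω ∈ s t <;> simp [h]
    _ = ∑' t, μ (s t) := by
        rw [lintegral_tsum (f := fun t => (s t).indicator 1)
          fun t => aemeasurable_const.indicator₀ (hs t)]
        simp_rw [lintegral_indicator_one₀ (hs _)]

theorem measure_lt_le_ofReal_integral_div {Ω : Type*} [MeasurableSpace Ω] {μ : Measure Ω}
    [IsFiniteMeasure μ] {f : Ω → ℝ} (hf0 : 0 ≤ᵐ[μ] f) (hfi : Integrable f μ) {ε : ℝ}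
    (hε : 0 < ε) : μ {ω | ε < f ω} ≤ ENNReal.ofReal ((∫ ω, f ω ∂μ) / ε) := by
  calc μ {ω | ε < f ω} ≤ μ {ω | ε ≤ f ω} := measure_mono fun ω (h : ε < f ω) => h.le
    _ = ENNReal.ofReal (μ.real {ω | ε ≤ f ω}) := (ofReal_measureReal (measure_ne_top _ _)).symm
    _ ≤ ENNReal.ofReal ((∫ ω, f ω ∂μ) / ε) := by
      gcongr
      rw [le_div_iff₀' hε]
      exact mul_meas_ge_le_integral_of_nonneg hf0 hfi ε

theorem pow_mul_le_inv_two_pow_div {β c : ℝ} (hβ0 : 0 ≤ β) (hβ1 : β ≤ 1) (hc : 1 ≤ c) {N : ℕ}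
    (hN : β ^ N * c ≤ 2⁻¹) {t : ℕ} (ht : t / N ≠ 0) : β ^ t * c ≤ 2⁻¹ ^ (t / N) := by
  calc β ^ t * c ≤ (β ^ N) ^ (t / N) * c ^ (t / N) := by
        rw [← pow_mul]
        exact mul_le_mul (pow_le_pow_of_le_one hβ0 hβ1 (Nat.mul_div_le t N)) (le_self_pow₀ hc ht)
          (by positivity) (by positivity)
    _ = (β ^ N * c) ^ (t / N) := (mul_pow _ _ _).symm
    _ ≤ 2⁻¹ ^ (t / N) := by gcongr

theorem pow_natCeil_logb_le {β y : ℝ} (hβ0 : 0 < β) (hβ1 : β < 1) (hy : 0 < y) :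
    β ^ ⌈Real.logb β y⌉₊ ≤ y := by
  calc β ^ ⌈Real.logb β y⌉₊ = β ^ (⌈Real.logb β y⌉₊ : ℝ) := (Real.rpow_natCast _ _).symm
    _ ≤ β ^ Real.logb β y := Real.rpow_le_rpow_of_exponent_ge hβ0 hβ1.le (Nat.le_ceil _)
    _ = y := Real.rpow_logb hβ0 hβ1.ne hy

theorem pow_natCeil_logb_div_mul_le_inv_two {β g x : ℝ} (hβ0 : 0 < β) (hβ1 : β < 1)
    (hg : 0 < g) (hx : 0 < x) : β ^ ⌈Real.logb β (g / (2 * x))⌉₊ * (x / g) ≤ 2⁻¹ := by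
  calc β ^ ⌈Real.logb β (g / (2 * x))⌉₊ * (x / g) ≤ g / (2 * x) * (x / g) := by
        gcongr
        exact pow_natCeil_logb_le hβ0 hβ1 (by positivity)
    _ = 2⁻¹ := by field_simp

section Drift

variable {Ω : Type*} {m0 : MeasurableSpace Ω} {μ : Measure Ω} {ℱ : Filtration ℕ m0}
  {X : ℕ → Ω → ℝ} {β : ℝ}

theorem integral_le_pow_mul_integral_of_condExp_le [IsFiniteMeasure μ] (hβ : 0 ≤ β)
    (hint : ∀ t, Integrable (X t) μ)
    (hdrift : ∀ t : ℕ, μ[X (t + 1)|ℱ t] ≤ᵐ[μ] fun ω => β * X t ω) (t : ℕ) :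
    ∫ ω, X t ω ∂μ ≤ β ^ t * ∫ ω, X 0 ω ∂μ := by
  induction t with
  | zero => simp
  | succ t ih =>
    calc ∫ ω, X (t + 1) ω ∂μ = ∫ ω, (μ[X (t + 1)|ℱ t]) ω ∂μ := (integral_condExp (ℱ.le t)).symm
      _ ≤ ∫ ω, β * X t ω ∂μ := integral_mono_ae integrable_condExp ((hint t).const_mul β) (hdrift t)
      _ = β * ∫ ω, X t ω ∂μ := integral_const_mul β _
      _ ≤ β ^ (t + 1) * ∫ ω, X 0 ω ∂μ := by
        rw [pow_succ', mul_assoc]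
        exact mul_le_mul_of_nonneg_left ih hβ

theorem measure_lt_le_ofReal_pow_mul [IsProbabilityMeasure μ] (hβ : 0 ≤ β)
    (hint : ∀ t, Integrable (X t) μ) (hnonneg : ∀ t, (0 : Ω → ℝ) ≤ᵐ[μ] X t)
    {x0 : ℝ} (hX0 : ∀ ω, X 0 ω = x0)
    (hdrift : ∀ t : ℕ, μ[X (t + 1)|ℱ t] ≤ᵐ[μ] fun ω => β * X t ω) {g : ℝ} (hg : 0 < g)
    (t : ℕ) : μ {ω | g < X t ω} ≤ ENNReal.ofReal (β ^ t * (x0 / g)) := by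
  calc μ {ω | g < X t ω} ≤ ENNReal.ofReal ((∫ ω, X t ω ∂μ) / g) :=
        measure_lt_le_ofReal_integral_div (hnonneg t) (hint t) hg
    _ ≤ ENNReal.ofReal (β ^ t * (x0 / g)) := by
        rw [← mul_div_assoc]
        gcongr
        simpa [hX0] using integral_le_pow_mul_integral_of_condExp_le hβ hint hdrift t

end Drift

theorem stmt2_general {Ω : Type*} {m0 : MeasurableSpace Ω} (μ : Measure Ω) [IsProbabilityMeasure μ]
    (ℱ : Filtration ℕ m0) (X : ℕ → Ω → ℝ) (β : ℝ) (hβ0 : 0 < β) (hβ1 : β < 1)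
    (hint : ∀ t, Integrable (X t) μ)
    (hnonneg : ∀ t, (0 : Ω → ℝ) ≤ᵐ[μ] X t)
    (x0 : ℝ) (hX0 : ∀ ω, X 0 ω = x0)
    (hdrift : ∀ t : ℕ, μ[X (t + 1)|ℱ t] ≤ᵐ[μ] fun ω => β * X t ω)
    (g : ℝ) (hg0 : 0 < g) (hgx : g < x0)
    (τ : Ω → ℝ≥0∞) (hτ : ∀ ω, τ ω = ⨅ (t : ℕ) (_ : X t ω ≤ g), (t : ℝ≥0∞)) :
    ∫⁻ ω, τ ω ∂μ ≤ ENNReal.ofReal (2 * (⌈Real.logb β (g / (2 * x0))⌉ : ℝ)) := by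
  have hx0 : 0 < x0 := hg0.trans hgx
  have hL : 0 < Real.logb β (g / (2 * x0)) := Real.logb_pos_of_base_lt_one hβ0 hβ1
    (by positivity) (by rw [div_lt_one (by positivity)]; linarith)
  set N := ⌈Real.logb β (g / (2 * x0))⌉₊ with hN
  have htail (t : ℕ) : μ {ω | g < X t ω} ≤ 2⁻¹ ^ (t / N) := by
    rcases eq_or_ne (t / N) 0 with ht | ht
    · simpa [ht] using prob_le_one
    calc μ {ω | g < X t ω} ≤ ENNReal.ofReal (β ^ t * (x0 / g)) :=
          measure_lt_le_ofReal_pow_mul hβ0.le hint hnonneg hX0 hdrift hg0 t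
      _ ≤ ENNReal.ofReal (2⁻¹ ^ (t / N)) := ENNReal.ofReal_le_ofReal <|
          pow_mul_le_inv_two_pow_div hβ0.le hβ1.le ((one_le_div hg0).2 hgx.le)
            (pow_natCeil_logb_div_mul_le_inv_two hβ0 hβ1 hg0 hx0) ht
      _ = 2⁻¹ ^ (t / N) := by simp [ENNReal.ofReal_pow, ENNReal.inv_pow]
  calc ∫⁻ ω, τ ω ∂μ = ∫⁻ ω, ⨅ (t : ℕ) (_ : ω ∉ {ω | g < X t ω}), (t : ℝ≥0∞) ∂μ := by
        simp_rw [hτ, Set.mem_ofPred_eq, not_lt]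
    _ ≤ ∑' t, μ {ω | g < X t ω} := lintegral_iInf_notMem_le_tsum_measure fun t =>
        nullMeasurableSet_lt aemeasurable_const (hint t).aemeasurable
    _ ≤ ∑' t : ℕ, 2⁻¹ ^ (t / N) := ENNReal.tsum_le_tsum htail
    _ = ENNReal.ofReal (2 * (⌈Real.logb β (g / (2 * x0))⌉ : ℝ)) := by
        rw [ENNReal.tsum_pow_div _ (Nat.ceil_pos.2 hL).ne', ENNReal.one_sub_inv_two, inv_inv,
          ← natCast_ceil_eq_intCast_ceil hL.le, ← hN]
        simp [ENNReal.ofReal_mul, mul_comm]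

/-- Drift lemma: if `(X_t)` is a nonnegative adapted process with deterministic start `x0`,
satisfying `E[X_t | F_{t-1}] ≤ β X_{t-1}` for `0 < β < 1`, and `τ(g)` is the first time the
process drops to level `g ∈ (0, x0)`, then `E[τ(g)] ≤ 2⌈log_β (g/(2 x0))⌉`. -/
theorem stmt2 {Ω : Type*} {m0 : MeasurableSpace Ω} (μ : Measure Ω) [IsProbabilityMeasure μ]
    (ℱ : Filtration ℕ m0) (X : ℕ → Ω → ℝ) (β : ℝ) (hβ0 : 0 < β) (hβ1 : β < 1)
    (hadapted : Adapted ℱ X) (hint : ∀ t, Integrable (X t) μ)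
    (hnonneg : ∀ t, (0 : Ω → ℝ) ≤ᵐ[μ] X t)
    (x0 : ℝ) (hX0 : ∀ ω, X 0 ω = x0)
    (hdrift : ∀ t : ℕ, μ[X (t + 1)|ℱ t] ≤ᵐ[μ] fun ω => β * X t ω)
    (g : ℝ) (hg0 : 0 < g) (hgx : g < x0)
    (τ : Ω → ℝ≥0∞) (hτ : ∀ ω, τ ω = ⨅ (t : ℕ) (_ : X t ω ≤ g), (t : ℝ≥0∞)) :
    ∫⁻ ω, τ ω ∂μ ≤ ENNReal.ofReal (2 * (⌈Real.logb β (g / (2 * x0))⌉ : ℝ)) :=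
  stmt2_general μ ℱ X β hβ0 hβ1 hint hnonneg x0 hX0 hdrift g hg0 hgx τ hτ
end

section
/- Let (X_t) be a Markov chain on a finite state space and S = Σ_{t=0}^{T-1} f(X_t) for some f : V → [0,1]. Suppose there is a constant M > 0 such that for every state w and every 0 ≤ s ≤ T−1, E[Σ_{t=s}^{T-1} f(X_t) | X_s = w] ≤ M. Then for every integer λ ≥ 1 and every start state, P(S ≥ λ·(2M+1)) ≤ 2^{−λ}. -/
/-!
Write `p(w, d)` for the probability that the sum of `f` along the chain started at `w`
reaches `d`. If every expected remaining sum is at most `M`, then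
`p(w, d + c) ≤ p(w, d) / 2` for `d ≥ 0` and `c ≥ 2M`: condition on the first time the
running sum reaches `d`; to reach `d + c` the sum from that time on, which already counts
the value of `f` there, must be at least `c`, and by Markov's inequality this has
conditional probability at most `M / c ≤ 1/2`. Iterating with `c = 2M + 1` gives
`p(w, λ(2M+1)) ≤ 2^{-λ}`, and averaging over the initial distribution gives the theorem.
-/

open Finset

/-- The probability weight of a path `x : Fin (T+1) → V` of a Markov chain with
transition matrix `P` and initial distribution `ν`. -/
noncomputable def pathWeight {V : Type*} [Fintype V] (P : Matrix V V ℝ) (ν : V → ℝ)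
    (T : ℕ) (x : Fin (T + 1) → V) : ℝ :=
  ν (x 0) * ∏ i : Fin T, P (x i.castSucc) (x i.succ)

section RestartBound

variable {V : Type*}

noncomputable def chainWeight (P : Matrix V V ℝ) (n : ℕ) (x : Fin (n + 1) → V) : ℝ :=
  ∏ i : Fin n, P (x i.castSucc) (x i.succ)

def pathSum (f : V → ℝ) (n : ℕ) (x : Fin (n + 1) → V) : ℝ :=
  ∑ t : Fin n, f (x t.castSucc)

section Path

variable {P : Matrix V V ℝ} {f : V → ℝ}

theorem chainWeight_cons (n : ℕ) (w : V) (z : Fin (n + 1) → V) :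
    chainWeight P (n + 1) (Fin.cons w z) = P w (z 0) * chainWeight P n z := by
  simp [chainWeight, Fin.prod_univ_succ]

theorem pathSum_cons (n : ℕ) (w : V) (z : Fin (n + 1) → V) :
    pathSum f (n + 1) (Fin.cons w z) = f w + pathSum f n z := by
  simp [pathSum, Fin.sum_univ_succ]

theorem chainWeight_nonneg (hP : ∀ u v, 0 ≤ P u v) (n : ℕ) (x : Fin (n + 1) → V) :
    0 ≤ chainWeight P n x :=
  prod_nonneg fun _ _ => hP _ _

theorem pathSum_nonneg (hf : ∀ u, 0 ≤ f u) (n : ℕ) (x : Fin (n + 1) → V) :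
    0 ≤ pathSum f n x :=
  sum_nonneg fun _ _ => hf _

end Path

variable [Fintype V]

theorem Fintype.sum_fin_succ_pi {β : Type*} [AddCommMonoid β] {n : ℕ}
    (g : (Fin (n + 1) → V) → β) :
    ∑ x, g x = ∑ v, ∑ z : Fin n → V, g (Fin.cons v z) := by
  rw [← (Fin.consEquiv fun _ => V).sum_comp, Fintype.sum_prod_type]
  rfl

/-- The probability that the chain started at `w` accumulates at least `c` in `n` steps. -/
noncomputable def tailProb (P : Matrix V V ℝ) (f : V → ℝ) (n : ℕ) (w : V) (c : ℝ) : ℝ :=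
  ∑ z ∈ univ.filter (fun z : Fin n → V => c ≤ pathSum f n (Fin.cons w z)),
    chainWeight P n (Fin.cons w z)

variable {P : Matrix V V ℝ} {f : V → ℝ}

theorem sum_chainWeight_cons (hP : ∀ u, ∑ v, P u v = 1) (n : ℕ) (w : V) :
    ∑ z : Fin n → V, chainWeight P n (Fin.cons w z) = 1 := by
  induction n generalizing w with
  | zero => simp [chainWeight]
  | succ n ih =>
    simp only [Fintype.sum_fin_succ_pi, chainWeight_cons, Fin.cons_zero, ← mul_sum, ih,
      mul_one, hP]

theorem tailProb_nonneg (hP : ∀ u v, 0 ≤ P u v) (n : ℕ) (w : V) (c : ℝ) :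
    0 ≤ tailProb P f n w c :=
  sum_nonneg fun _ _ => chainWeight_nonneg hP _ _

theorem tailProb_le_one (hP : ∀ u v, 0 ≤ P u v) (hP1 : ∀ u, ∑ v, P u v = 1)
    (n : ℕ) (w : V) (c : ℝ) : tailProb P f n w c ≤ 1 :=
  (sum_le_sum_of_subset_of_nonneg (filter_subset _ _) fun _ _ _ =>
    chainWeight_nonneg hP _ _).trans_eq (sum_chainWeight_cons hP1 n w)

theorem tailProb_of_nonpos (hP1 : ∀ u, ∑ v, P u v = 1) (hf : ∀ u, 0 ≤ f u)
    (n : ℕ) (w : V) {c : ℝ} (hc : c ≤ 0) : tailProb P f n w c = 1 := by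
  rw [tailProb, filter_true_of_mem fun z _ => hc.trans (pathSum_nonneg hf _ _),
    sum_chainWeight_cons hP1]

theorem tailProb_zero (w : V) {c : ℝ} (hc : 0 < c) : tailProb P f 0 w c = 0 := by
  simp [tailProb, pathSum, not_le.mpr hc]

theorem tailProb_succ (n : ℕ) (w : V) (c : ℝ) :
    tailProb P f (n + 1) w c = ∑ v, P w v * tailProb P f n v (c - f w) := by
  simp only [tailProb, sum_filter, Fintype.sum_fin_succ_pi, mul_sum, mul_ite, mul_zero,
    chainWeight_cons, pathSum_cons, Fin.cons_zero, sub_le_iff_le_add']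

theorem sum_filter_pathWeight (ν : V → ℝ) (n : ℕ) (c : ℝ) :
    ∑ x ∈ univ.filter (fun x : Fin (n + 1) → V => c ≤ pathSum f n x), pathWeight P ν n x =
      ∑ v, ν v * tailProb P f n v c := by
  simp only [tailProb, sum_filter, Fintype.sum_fin_succ_pi, mul_sum, mul_ite, mul_zero]
  rfl

variable [DecidableEq V]

noncomputable def expectedSum (P : Matrix V V ℝ) (f : V → ℝ) (n : ℕ) (w : V) : ℝ :=
  ∑ r ∈ range n, ∑ u, (P ^ r) w u * f u

theorem expectedSum_succ (n : ℕ) (w : V) :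
    expectedSum P f (n + 1) w = f w + ∑ v, P w v * expectedSum P f n v := by
  simp only [expectedSum, sum_range_succ', pow_succ', Matrix.mul_apply, sum_mul, mul_sum,
    mul_assoc, pow_zero, Matrix.one_apply, ite_mul, one_mul, zero_mul, sum_ite_eq,
    mem_univ, if_true]
  rw [add_comm]
  congr 1
  conv_rhs => rw [sum_comm]
  exact sum_congr rfl fun r _ => sum_comm

theorem sum_chainWeight_mul_pathSum (hP1 : ∀ u, ∑ v, P u v = 1) (n : ℕ) (w : V) :
    ∑ z : Fin n → V, chainWeight P n (Fin.cons w z) * pathSum f n (Fin.cons w z) =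
      expectedSum P f n w := by
  induction n generalizing w with
  | zero => simp [pathSum, expectedSum]
  | succ n ih =>
    simp only [Fintype.sum_fin_succ_pi, chainWeight_cons, pathSum_cons, Fin.cons_zero,
      expectedSum_succ, mul_add, sum_add_distrib, mul_assoc, ← mul_sum, ih,
      ← sum_mul, sum_chainWeight_cons hP1, hP1, one_mul]

theorem expectedSum_nonneg (hP : ∀ u v, 0 ≤ P u v) (hP1 : ∀ u, ∑ v, P u v = 1)
    (hf : ∀ u, 0 ≤ f u) (n : ℕ) (w : V) : 0 ≤ expectedSum P f n w :=
  sum_chainWeight_mul_pathSum hP1 n w ▸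
    sum_nonneg fun _ _ => mul_nonneg (chainWeight_nonneg hP _ _) (pathSum_nonneg hf _ _)

theorem mul_tailProb_le (hP : ∀ u v, 0 ≤ P u v) (hP1 : ∀ u, ∑ v, P u v = 1)
    (hf : ∀ u, 0 ≤ f u) (n : ℕ) (w : V) (c : ℝ) :
    c * tailProb P f n w c ≤ expectedSum P f n w := by
  rw [← sum_chainWeight_mul_pathSum hP1, tailProb, mul_sum]
  calc _ ≤ ∑ z ∈ univ.filter (fun z : Fin n → V => c ≤ pathSum f n (Fin.cons w z)),
        chainWeight P n (Fin.cons w z) * pathSum f n (Fin.cons w z) :=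
        sum_le_sum fun z hz => by
          rw [mul_comm]
          exact mul_le_mul_of_nonneg_left (mem_filter.mp hz).2 (chainWeight_nonneg hP _ _)
    _ ≤ _ := sum_le_sum_of_subset_of_nonneg (filter_subset _ _) fun _ _ _ =>
        mul_nonneg (chainWeight_nonneg hP _ _) (pathSum_nonneg hf _ _)

theorem tailProb_add_le_half (hP : ∀ u v, 0 ≤ P u v) (hP1 : ∀ u, ∑ v, P u v = 1)
    (hf : ∀ u, 0 ≤ f u) {M c : ℝ} (hc : 0 < c) (hMc : 2 * M ≤ c) {n : ℕ}
    (hE : ∀ v m, m ≤ n → expectedSum P f m v ≤ M) (w : V) {d : ℝ} (hd : 0 ≤ d) :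
    tailProb P f n w (d + c) ≤ tailProb P f n w d / 2 := by
  induction n generalizing w d with
  | zero =>
    rw [tailProb_zero w (by linarith)]
    exact div_nonneg (tailProb_nonneg hP 0 w d) zero_le_two
  | succ n ih =>
    by_cases hcross : d ≤ f w
    · -- the level `d` is already reached at time 0, so Markov's inequality applies from `w`
      have hone : tailProb P f (n + 1) w d = 1 := by
        simp only [tailProb_succ, tailProb_of_nonpos hP1 hf n _ (sub_nonpos.mpr hcross),
          mul_one, hP1]
      have hmarkov := (mul_tailProb_le hP hP1 hf (n + 1) w (d + c)).trans (hE w (n + 1) le_rfl)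
      rw [hone]
      nlinarith [tailProb_nonneg hP (f := f) (n + 1) w (d + c)]
    · have hE' : ∀ v m, m ≤ n → expectedSum P f m v ≤ M := fun v m hm =>
        hE v m (hm.trans n.le_succ)
      rw [tailProb_succ, tailProb_succ, sum_div]
      refine sum_le_sum fun v _ => ?_
      rw [mul_div_assoc, add_sub_right_comm]
      exact mul_le_mul_of_nonneg_left (ih hE' v (by linarith)) (hP w v)

theorem tailProb_nat_mul_le_half_pow (hP : ∀ u v, 0 ≤ P u v) (hP1 : ∀ u, ∑ v, P u v = 1)
    (hf : ∀ u, 0 ≤ f u) {M c : ℝ} (hc : 0 < c) (hMc : 2 * M ≤ c) {n : ℕ}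
    (hE : ∀ v m, m ≤ n → expectedSum P f m v ≤ M) (w : V) (k : ℕ) :
    tailProb P f n w (k * c) ≤ (1 / 2) ^ k := by
  induction k with
  | zero => simpa using tailProb_le_one hP hP1 n w 0
  | succ k ih =>
    calc tailProb P f n w ((k + 1 : ℕ) * c) = tailProb P f n w (k * c + c) := by
          push_cast; ring_nf
      _ ≤ tailProb P f n w (k * c) / 2 :=
          tailProb_add_le_half hP hP1 hf hc hMc hE w (by positivity)
      _ ≤ (1 / 2) ^ k / 2 := by gcongr
      _ = (1 / 2) ^ (k + 1) := by ring

end RestartBound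

theorem stmt9_general {V : Type*} [Fintype V] [DecidableEq V]
    (P : Matrix V V ℝ) (hnn : ∀ u v, 0 ≤ P u v) (hst : ∀ u, ∑ v, P u v = 1)
    (ν : V → ℝ) (hν : ∀ u, 0 ≤ ν u) (hνsum : ∑ u, ν u = 1)
    (T : ℕ) (f : V → ℝ) (hf0 : ∀ u, 0 ≤ f u)
    (M : ℝ)
    (hexp : ∀ (w : V) (s : ℕ), s ≤ T - 1 →
      ∑ r ∈ Finset.range (T - s), ∑ u, (P ^ r) w u * f u ≤ M)
    (lam : ℕ) :
    ∑ x ∈ Finset.univ.filter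
        (fun x : Fin (T + 1) → V =>
          (lam : ℝ) * (2 * M + 1) ≤ ∑ t : Fin T, f (x t.castSucc)),
      pathWeight P ν T x ≤ (1 / 2 : ℝ) ^ lam := by
  have hM (w : V) : 0 ≤ M :=
    (expectedSum_nonneg hnn hst hf0 _ w).trans (hexp w (T - 1) le_rfl)
  have hE (w : V) (n : ℕ) (hn : n ≤ T) : expectedSum P f n w ≤ M := by
    obtain rfl | hn0 := n.eq_zero_or_pos
    · simpa [expectedSum] using hM w
    · simpa [expectedSum, Nat.sub_sub_self hn] using hexp w (T - n) (by omega)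
  calc _ = ∑ v, ν v * tailProb P f T v (lam * (2 * M + 1)) := sum_filter_pathWeight ν T _
    _ ≤ ∑ v, ν v * (1 / 2) ^ lam := by
      refine sum_le_sum fun v _ => mul_le_mul_of_nonneg_left ?_ (hν v)
      exact tailProb_nat_mul_le_half_pow hnn hst hf0 (by linarith [hM v]) (by linarith) hE v lam
    _ = (1 / 2) ^ lam := by rw [← sum_mul, hνsum, one_mul]

/-- Restart concentration bound: if from every state `w` and time `s ≤ T−1` the expected
remaining sum `E[Σ_{t=s}^{T−1} f(X_t) | X_s = w] = Σ_{r<T−s} Σ_u p^r_{w,u} f(u)` is at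
most `M`, then `P(Σ_{t=0}^{T−1} f(X_t) ≥ λ(2M+1)) ≤ 2^{−λ}` for every integer `λ ≥ 1`
and every initial distribution `ν`. -/
theorem stmt9 {V : Type*} [Fintype V] [DecidableEq V]
    (P : Matrix V V ℝ) (hnn : ∀ u v, 0 ≤ P u v) (hst : ∀ u, ∑ v, P u v = 1)
    (ν : V → ℝ) (hν : ∀ u, 0 ≤ ν u) (hνsum : ∑ u, ν u = 1)
    (T : ℕ) (f : V → ℝ) (hf0 : ∀ u, 0 ≤ f u) (hf1 : ∀ u, f u ≤ 1)
    (M : ℝ) (hM : 0 < M)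
    (hexp : ∀ (w : V) (s : ℕ), s ≤ T - 1 →
      ∑ r ∈ Finset.range (T - s), ∑ u, (P ^ r) w u * f u ≤ M)
    (lam : ℕ) (hlam : 1 ≤ lam) :
    ∑ x ∈ Finset.univ.filter
        (fun x : Fin (T + 1) → V =>
          (lam : ℝ) * (2 * M + 1) ≤ ∑ t : Fin T, f (x t.castSucc)),
      pathWeight P ν T x ≤ (1 / 2 : ℝ) ^ lam :=
  stmt9_general P hnn hst ν hν hνsum T f hf0 M hexp lam
end

section
/- Consider a reversible Markov chain with transition probabilities p^t and stationary distribution π, and let S be a set of states such that π(v)/π(u) ≤ γ for all u,v ∈ S. For a walk started at u ∈ S define Z̃ = Σ_{t=0}^{T-1} 1[X_t ∈ S]·p^t_{u,X_t}. If Σ_{t=0}^{2T-2} p^t_{u,u} ≤ 16·T⁺·π(u) for all u, then E[Z̃] ≤ 16·γ·T⁺·max_{w∈S} π(w). -/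
/-- Expected-collision bound on a near-regular set: for a reversible chain with
stationary distribution `π`, a set `S` with `π(v) ≤ γ·π(u)` for all `u, v ∈ S`, and the
occupation bound `Σ_{t=0}^{2T−2} p^t_{u,u} ≤ 16·T⁺·π(u)` for all `u`, the expected
collision count `E[Z̃] = Σ_{t<T} Σ_{v∈S} (p^t_{u,v})²` of a walk started at `u ∈ S`
satisfies `E[Z̃] ≤ 16·γ·T⁺·max_{w∈S} π(w)`. -/
theorem stmt10 {V : Type*} [Fintype V] [DecidableEq V]
    (P : Matrix V V ℝ) (π : V → ℝ)
    (hπpos : ∀ v, 0 < π v)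
    (hnn : ∀ u v, 0 ≤ P u v) (hst : ∀ u, ∑ v, P u v = 1)
    (hrev : ∀ u v, π u * P u v = π v * P v u)
    (γ : ℝ) (S : Finset V) (hγ : ∀ u ∈ S, ∀ v ∈ S, π v ≤ γ * π u)
    (T : ℕ) (Tplus : ℝ)
    (hocc : ∀ u : V, ∑ t ∈ Finset.range (2 * T - 1), (P ^ t) u u ≤ 16 * Tplus * π u)
    (u : V) (hu : u ∈ S) :
    ∑ t ∈ Finset.range T, ∑ v ∈ S, (P ^ t) u v * (P ^ t) u v
      ≤ 16 * γ * Tplus * S.sup' ⟨u, hu⟩ π := by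
  have hπu := hπpos u
  have hγ1 : 1 ≤ γ := by nlinarith [hγ u hu u hu]
  have hPnn : ∀ t (a b : V), 0 ≤ (P ^ t) a b := by
    intro t
    induction t with
    | zero =>
      intro a b
      simp only [pow_zero, Matrix.one_apply]
      split <;> norm_num
    | succ t ih =>
      intro a b
      rw [pow_succ, Matrix.mul_apply]
      exact Finset.sum_nonneg fun w _ => mul_nonneg (ih a w) (hnn w b)
  have hrevt : ∀ t (a b : V), π a * (P ^ t) a b = π b * (P ^ t) b a := by
    intro t
    induction t with
    | zero =>
      intro a b
      by_cases h : a = b <;> simp [pow_zero, Matrix.one_apply, h, eq_comm]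
    | succ t ih =>
      intro a b
      rw [pow_succ]
      conv_rhs => rw [← pow_succ, pow_succ']
      rw [Matrix.mul_apply, Matrix.mul_apply, Finset.mul_sum, Finset.mul_sum]
      refine Finset.sum_congr rfl fun w _ => ?_
      have h1 : π a * (P ^ t) a w = π w * (P ^ t) w a := ih a w
      have h2 : π w * P w b = π b * P b w := hrev w b
      calc π a * ((P ^ t) a w * P w b) = (π a * (P ^ t) a w) * P w b := by ring
        _ = (π w * (P ^ t) w a) * P w b := by rw [h1]
        _ = (π w * P w b) * (P ^ t) w a := by ring
        _ = (π b * P b w) * (P ^ t) w a := by rw [h2]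
        _ = π b * (P b w * (P ^ t) w a) := by ring
  have hstep : ∀ t, ∀ v ∈ S, (P ^ t) u v ≤ γ * (P ^ t) v u := by
    intro t v hv
    have h1 := hrevt t u v
    have h2 := hγ u hu v hv
    have h3 := hPnn t v u
    nlinarith
  have key : ∀ t, ∑ v ∈ S, (P ^ t) u v * (P ^ t) u v ≤ γ * (P ^ (2 * t)) u u := by
    intro t
    have h2t : (P ^ (2 * t)) u u = ∑ v, (P ^ t) u v * (P ^ t) v u := by
      rw [two_mul, pow_add, Matrix.mul_apply]
    rw [h2t, Finset.mul_sum]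
    calc ∑ v ∈ S, (P ^ t) u v * (P ^ t) u v
        ≤ ∑ v ∈ S, γ * ((P ^ t) u v * (P ^ t) v u) := by
          refine Finset.sum_le_sum fun v hv => ?_
          have := hstep t v hv
          have h3 := hPnn t u v
          nlinarith
      _ ≤ ∑ v, γ * ((P ^ t) u v * (P ^ t) v u) := by
          refine Finset.sum_le_sum_of_subset_of_nonneg (Finset.subset_univ S) ?_
          intro v _ _
          exact mul_nonneg (by linarith) (mul_nonneg (hPnn t u v) (hPnn t v u))
  have hsub : (Finset.range T).image (fun t => 2 * t) ⊆ Finset.range (2 * T - 1) := by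
    intro s hs
    simp only [Finset.mem_image, Finset.mem_range] at hs ⊢
    obtain ⟨t, ht, rfl⟩ := hs
    omega
  have hsum2 : ∑ t ∈ Finset.range T, (P ^ (2 * t)) u u
      ≤ ∑ s ∈ Finset.range (2 * T - 1), (P ^ s) u u := by
    rw [← Finset.sum_image (g := fun t => 2 * t) (f := fun s => (P ^ s) u u)
      (fun x _ y _ h => by simp only at h; omega)]
    exact Finset.sum_le_sum_of_subset_of_nonneg hsub fun s _ _ => hPnn s u u
  have hTplus : 0 ≤ Tplus := by
    have h1 := hocc u
    have h2 : (0:ℝ) ≤ ∑ s ∈ Finset.range (2 * T - 1), (P ^ s) u u :=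
      Finset.sum_nonneg fun s _ => hPnn s u u
    nlinarith
  have hsup : π u ≤ S.sup' ⟨u, hu⟩ π := Finset.le_sup' π hu
  calc ∑ t ∈ Finset.range T, ∑ v ∈ S, (P ^ t) u v * (P ^ t) u v
      ≤ ∑ t ∈ Finset.range T, γ * (P ^ (2 * t)) u u :=
        Finset.sum_le_sum fun t _ => key t
    _ = γ * ∑ t ∈ Finset.range T, (P ^ (2 * t)) u u := by rw [Finset.mul_sum]
    _ ≤ γ * (16 * Tplus * π u) := by
        have := hocc u
        nlinarith [hsum2]
    _ ≤ 16 * γ * Tplus * S.sup' ⟨u, hu⟩ π := by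
        have hγ0 : (0:ℝ) ≤ γ := le_trans zero_le_one hγ1
        have h0 : 0 ≤ 16 * γ * Tplus * (S.sup' ⟨u, hu⟩ π - π u) :=
          mul_nonneg (mul_nonneg (mul_nonneg (by norm_num) hγ0) hTplus)
            (sub_nonneg.mpr hsup)
        nlinarith
end
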